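/- The 1/2-stable Biane process is self-similar with exponent 2: for λ > 0 and 0 ≤ t₁ < t₂, f⁽¹'²⁾_{λt₁, λt₂}(λ²y₁, λ²y₂) · λ² = f⁽¹'²⁾_{t₁,t₂}(y₁, y₂) for all y₁ > t₁²/4 and y₂ > t₂²/4, and ν_{λt}⁽¹'²⁾(λ²A) = ν_t⁽¹'²⁾(A) for Borel A ⊆ (t²/4,∞). -/
import Mathlib


/-- Transition density f⁽¹ᐟ²⁾_{t₁,t₂}(y₁,y₂) of the 1/2-stable Biane process. -/
noncomputable def fHalf (t₁ t₂ y₁ y₂ : ℝ) : ℝ :=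
  (t₂-t₁) * Real.sqrt (4*y₂ - t₂^2)
    / (2*Real.pi * ((y₂-y₁)^2 - (t₂-t₁)*(t₁*y₂ - t₂*y₁)))

theorem stmt15 (lam : ℝ) (hlam : 0 < lam) (t₁ t₂ : ℝ) (ht₁ : 0 ≤ t₁) (ht : t₁ < t₂)
    (y₁ y₂ : ℝ) (hy₁ : t₁^2/4 < y₁) (hy₂ : t₂^2/4 < y₂)
    (t : ℝ) (htpos : 0 < t) (A : Set ℝ) (hA : MeasurableSet A)
    (hA' : A ⊆ Set.Ioi (t^2/4)) :
    fHalf (lam*t₁) (lam*t₂) (lam^2*y₁) (lam^2*y₂) * lam^2 = fHalf t₁ t₂ y₁ y₂ ∧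
    (∫ x in (fun a => lam^2 * a) '' A,
        (lam*t) * Real.sqrt (4*x - (lam*t)^2) / (2*Real.pi*x^2))
      = ∫ x in A, t * Real.sqrt (4*x - t^2) / (2*Real.pi*x^2) := by
  have hlam0 : lam ≠ 0 := ne_of_gt hlam
  have hl4 : lam^4 ≠ 0 := pow_ne_zero _ hlam0
  have hsq : ∀ x : ℝ, Real.sqrt (lam^2 * x) = lam * Real.sqrt x := by
    intro x
    rw [Real.sqrt_mul (sq_nonneg lam), Real.sqrt_sq hlam.le]
  constructor
  · unfold fHalf
    have h1 : 4*(lam^2*y₂) - (lam*t₂)^2 = lam^2 * (4*y₂ - t₂^2) := by ring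
    rw [h1, hsq]
    have h2 : (lam*t₂ - lam*t₁) * (lam * Real.sqrt (4*y₂ - t₂^2)) =
        lam^2 * ((t₂-t₁) * Real.sqrt (4*y₂ - t₂^2)) := by ring
    have h3 : 2*Real.pi * ((lam^2*y₂-lam^2*y₁)^2 -
        (lam*t₂-lam*t₁)*((lam*t₁)*(lam^2*y₂) - (lam*t₂)*(lam^2*y₁))) =
        lam^4 * (2*Real.pi * ((y₂-y₁)^2 - (t₂-t₁)*(t₁*y₂ - t₂*y₁))) := by ring
    rw [h2, h3]
    rw [div_mul_eq_mul_div, show lam^2 * ((t₂-t₁) * Real.sqrt (4*y₂ - t₂^2)) * lam^2 =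
      lam^4 * ((t₂-t₁) * Real.sqrt (4*y₂ - t₂^2)) from by ring,
      mul_div_mul_left _ _ hl4]
  · have hderiv : ∀ x ∈ A, HasDerivWithinAt (fun a => lam^2 * a) (lam^2) A x := by
      intro x _
      simpa using ((hasDerivAt_id x).const_mul (lam^2)).hasDerivWithinAt
    have hinj : Set.InjOn (fun a => lam^2 * a) A := fun a _ b _ h =>
      mul_left_cancel₀ (pow_ne_zero 2 hlam0) h
    rw [MeasureTheory.integral_image_eq_integral_abs_deriv_smul hA hderiv hinj]
    refine MeasureTheory.setIntegral_congr_fun hA fun x _ => ?_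
    simp only [smul_eq_mul, abs_of_pos (pow_pos hlam 2)]
    have h1 : 4*(lam^2*x) - (lam*t)^2 = lam^2 * (4*x - t^2) := by ring
    rw [h1, hsq]
    rw [show lam^2 * ((lam*t) * (lam * Real.sqrt (4*x - t^2)) / (2*Real.pi*(lam^2*x)^2)) =
      lam^4 * (t * Real.sqrt (4*x - t^2)) / (lam^4 * (2*Real.pi*x^2)) from by ring,
      mul_div_mul_left _ _ hl4]
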